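/- The entanglement of purification is monotone under local channels on one side: for any bipartite state ρ^{AR} and quantum channel 𝒩 from A to B, E_p(A:R)_ρ ≥ E_p(B:R)_{(𝒩⊗I)(ρ)}. -/

import Mathlib

open scoped BigOperators ComplexOrder
open Matrix

noncomputable section
attribute [local instance] Classical.propDecidable

/-- `-x log₂ x`, extended by `0` for non-positive `x`. -/
def negxlog2 (x : ℝ) : ℝ := if x ≤ 0 then 0 else -(x * Real.logb 2 x)

/-- Von Neumann entropy (base 2) of a matrix, via eigenvalues of a Hermitian matrix
(junk value `0` on non-Hermitian matrices). -/
def entropy {n : Type} [Fintype n] [DecidableEq n] (M : Matrix n n ℂ) : ℝ :=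
  if h : M.IsHermitian then ∑ i, negxlog2 (h.eigenvalues i) else 0

/-- Partial trace over the right (second) factor. -/
def ptraceRight {A R : Type} [Fintype A] [Fintype R]
    (M : Matrix (A × R) (A × R) ℂ) : Matrix A A ℂ :=
  Matrix.of fun a a' => ∑ r, M (a, r) (a', r)

/-- Partial trace over the left (first) factor. -/
def ptraceLeft {A R : Type} [Fintype A] [Fintype R]
    (M : Matrix (A × R) (A × R) ℂ) : Matrix R R ℂ :=
  Matrix.of fun r r' => ∑ a, M (a, r) (a, r')

/-- Quantum mutual information `I(A:R) = S(A) + S(R) - S(AR)` of a bipartite matrix. -/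
def mutualInfo {A R : Type} [Fintype A] [DecidableEq A] [Fintype R] [DecidableEq R]
    (M : Matrix (A × R) (A × R) ℂ) : ℝ :=
  entropy (ptraceRight M) + entropy (ptraceLeft M) - entropy M

/-- The extension `Φ ⊗ id_n` of a linear map on matrices, applied entrywise. -/
def matExt {A B n : Type} [Fintype A] [Fintype B] [Fintype n]
    (Φ : Matrix A A ℂ →ₗ[ℂ] Matrix B B ℂ) (M : Matrix (A × n) (A × n) ℂ) :
    Matrix (B × n) (B × n) ℂ :=
  Matrix.of fun p q => Φ (Matrix.of fun a a' => M (a, p.2) (a', q.2)) p.1 q.1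

/-- A linear map on matrices is a quantum channel if it is completely positive
(all extensions preserve positive semidefiniteness) and trace preserving. -/
def IsQChannel {A B : Type} [Fintype A] [Fintype B]
    (Φ : Matrix A A ℂ →ₗ[ℂ] Matrix B B ℂ) : Prop :=
  (∀ (n : Type) [Fintype n], ∀ M : Matrix (A × n) (A × n) ℂ,
      M.PosSemidef → (matExt Φ M).PosSemidef) ∧
  ∀ M : Matrix A A ℂ, (Φ M).trace = M.trace

/-- Density matrix predicate. -/
def IsDensity {n : Type} [Fintype n] (M : Matrix n n ℂ) : Prop :=
  M.PosSemidef ∧ M.trace = 1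

/-- The rank-one matrix `|v⟩⟨v|`. -/
def pureMat {d : Type} (v : d → ℂ) : Matrix d d ℂ :=
  Matrix.of fun i j => v i * (starRingEnd ℂ) (v j)

/-- `ψ` (a vector on `A ⊗ A' ⊗ R`) purifies the bipartite state `ρ` on `A ⊗ R`. -/
def Purifies {A A' R : Type} [Fintype A'] (ψ : A × A' × R → ℂ)
    (ρ : Matrix (A × R) (A × R) ℂ) : Prop :=
  ∀ a r a' r', ρ (a, r) (a', r') = ∑ x, ψ (a, x, r) * (starRingEnd ℂ) (ψ (a', x, r'))

/-- The state on `A ⊗ A''` obtained from the purification `ψ` by applying `Φ` to the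
purifying system `A'` and tracing out `R`. -/
def epOut {A A' A'' R : Type} [Fintype A] [Fintype A'] [Fintype A''] [Fintype R]
    (ψ : A × A' × R → ℂ) (Φ : Matrix A' A' ℂ →ₗ[ℂ] Matrix A'' A'' ℂ) :
    Matrix (A × A'') (A × A'') ℂ :=
  Matrix.of fun p q => ∑ r, Φ (Matrix.of fun x x' =>
      ψ (p.1, x, r) * (starRingEnd ℂ) (ψ (q.1, x', r))) p.2 q.2

/-- Witness predicate for the entanglement of purification. -/
def EpWitness {A R : Type} [Fintype A] [DecidableEq A] [Fintype R]
    (ρ : Matrix (A × R) (A × R) ℂ) (e : ℝ)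
    (A' A'' : Type) [Fintype A'] [Fintype A''] [DecidableEq A''] : Prop :=
  ∃ (ψ : A × A' × R → ℂ) (Φ : Matrix A' A' ℂ →ₗ[ℂ] Matrix A'' A'' ℂ),
    Purifies ψ ρ ∧ IsQChannel Φ ∧ e = entropy (epOut ψ Φ)

/-- Entanglement of purification `E_p(A:R)` of a bipartite matrix: the infimum of
`S(A A'')` over purifications and channels applied to the purifying system. -/
def Ep {A R : Type} [Fintype A] [DecidableEq A] [Fintype R]
    (ρ : Matrix (A × R) (A × R) ℂ) : ℝ :=
  sInf { e : ℝ | ∃ (A' A'' : Type) (i1 : Fintype A') (i2 : Fintype A'')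
      (i3 : DecidableEq A''), @EpWitness A R _ _ _ ρ e A' A'' i1 i2 i3 }

/-- The square root of a positive semidefinite matrix, as `Matrix.PosSemidef.sqrt` was
defined in the older Mathlib (removed since). -/
def posSemidefSqrt {n : Type} [Fintype n] [DecidableEq n] {A : Matrix n n ℂ}
    (hA : A.PosSemidef) : Matrix n n ℂ :=
  (hA.1.eigenvectorUnitary : Matrix n n ℂ) *
    Matrix.diagonal ((↑) ∘ (Real.sqrt ·) ∘ hA.1.eigenvalues) *
    (star hA.1.eigenvectorUnitary : Matrix n n ℂ)

/-- Fidelity `F(ρ,σ) = (tr √(√ρ σ √ρ))²` (junk value `0` off positive semidefinite pairs). -/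
def fidelity {n : Type} [Fintype n] [DecidableEq n] (ρ σ : Matrix n n ℂ) : ℝ :=
  if h : ρ.PosSemidef ∧ σ.PosSemidef then
    if h2 : (posSemidefSqrt h.1 * σ * posSemidefSqrt h.1).PosSemidef then
      ((posSemidefSqrt h2).trace.re) ^ 2 else 0
  else 0

lemma psqrt_herm {n : Type} [Fintype n] [DecidableEq n] {A : Matrix n n ℂ}
    (hA : A.PosSemidef) : (posSemidefSqrt hA).IsHermitian := by
  unfold posSemidefSqrt Matrix.IsHermitian
  simp [Matrix.star_eq_conjTranspose, Matrix.diagonal_conjTranspose, Matrix.mul_assoc, Pi.star_def]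
  rfl

lemma psqrt_mul_self {n : Type} [Fintype n] [DecidableEq n] {A : Matrix n n ℂ}
    (hA : A.PosSemidef) : posSemidefSqrt hA * posSemidefSqrt hA = A := by
  unfold posSemidefSqrt
  have hU : (star hA.1.eigenvectorUnitary : Matrix n n ℂ) * (hA.1.eigenvectorUnitary : Matrix n n ℂ) = 1 :=
    Unitary.star_mul_self_of_mem hA.1.eigenvectorUnitary.2
  have hD : Matrix.diagonal (((↑) ∘ (Real.sqrt ·) ∘ hA.1.eigenvalues : n → ℂ)) *
      Matrix.diagonal ((↑) ∘ (Real.sqrt ·) ∘ hA.1.eigenvalues)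
      = Matrix.diagonal (RCLike.ofReal ∘ hA.1.eigenvalues) := by
    rw [Matrix.diagonal_mul_diagonal]
    congr 1; funext i
    simp only [Function.comp]
    rw [← Complex.ofReal_mul, Real.mul_self_sqrt (hA.eigenvalues_nonneg i)]
    rfl
  conv_rhs => rw [hA.1.spectral_theorem, Unitary.conjStarAlgAut_apply]
  simp only [Matrix.mul_assoc]
  rw [← Matrix.mul_assoc (star (hA.1.eigenvectorUnitary : Matrix n n ℂ)), hU, Matrix.one_mul, ← Matrix.mul_assoc (diagonal _), hD]

section AuxProofs
open Polynomial

lemma my_eval_charpoly {n : Type} [Fintype n] [DecidableEq n] (M : Matrix n n ℂ) (t : ℂ) :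
    M.charpoly.eval t = (t • (1 : Matrix n n ℂ) - M).det := by
  have h : M.charpoly.eval t = ((charmatrix M).map (Polynomial.evalRingHom t)).det :=
    (Polynomial.evalRingHom t).map_det (charmatrix M)
  have h2 : (charmatrix M).map (Polynomial.evalRingHom t) = t • 1 - M := by
    ext i j
    by_cases hij : i = j
    · subst hij
      simp [charmatrix_apply_eq, Matrix.one_apply_eq]
    · simp [charmatrix_apply_ne _ _ _ hij, Matrix.one_apply_ne hij]
  rw [h2] at h
  exact h

lemma hermitian_charpoly {n : Type} [Fintype n] [DecidableEq n] {M : Matrix n n ℂ}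
    (hM : M.IsHermitian) :
    M.charpoly = ∏ i, (X - C ((hM.eigenvalues i : ℝ) : ℂ)) := by
  apply Polynomial.eq_of_infinite_eval_eq
  have : {x : ℂ | eval x M.charpoly = eval x (∏ i, (X - C ((hM.eigenvalues i : ℝ) : ℂ)))} = Set.univ := by
    ext t
    simp only [Set.mem_setOf_eq, Set.mem_univ, iff_true]
    rw [my_eval_charpoly]
    set U : Matrix n n ℂ := (hM.eigenvectorUnitary : Matrix n n ℂ) with hU
    have hUU : U * star U = 1 := (Matrix.mem_unitaryGroup_iff).mp hM.eigenvectorUnitary.2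
    have hone : U * (t • (1 : Matrix n n ℂ)) * star U = t • (1 : Matrix n n ℂ) := by
      rw [Matrix.mul_smul, Matrix.smul_mul, Matrix.mul_one, hUU]
    have hdiag : t • (1 : Matrix n n ℂ) - M
        = U * (t • (1 : Matrix n n ℂ) - diagonal (RCLike.ofReal ∘ hM.eigenvalues)) * star U := by
      rw [Matrix.mul_sub, Matrix.sub_mul, hone]
      conv_lhs => rw [hM.spectral_theorem, Unitary.conjStarAlgAut_apply]
    have hdet : U.det * (star U).det = 1 := by rw [← Matrix.det_mul, hUU, Matrix.det_one]
    rw [hdiag, Matrix.det_mul, Matrix.det_mul]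
    have : U.det * (t • (1:Matrix n n ℂ) - diagonal (RCLike.ofReal ∘ hM.eigenvalues)).det * (star U).det
        = (t • (1:Matrix n n ℂ) - diagonal (RCLike.ofReal ∘ hM.eigenvalues)).det * (U.det * (star U).det) := by
      ring
    rw [this, hdet, mul_one, smul_one_eq_diagonal, diagonal_sub, Matrix.det_diagonal,
      Polynomial.eval_prod]
    simp [Function.comp]
  rw [this]
  exact Set.infinite_univ

lemma charpoly_isometry {m n : Type} [Fintype m] [DecidableEq m] [Fintype n] [DecidableEq n]
    (W : Matrix m n ℂ) (hW : Wᴴ * W = 1) (τ : Matrix n n ℂ)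
    (hc : Fintype.card n ≤ Fintype.card m) :
    (W * τ * Wᴴ).charpoly = X ^ (Fintype.card m - Fintype.card n) * τ.charpoly := by
  apply Polynomial.eq_of_infinite_eval_eq
  apply Set.Infinite.mono (s := {(0:ℂ)}ᶜ)
  · intro t ht
    simp only [Set.mem_compl_iff, Set.mem_singleton_iff] at ht
    simp only [Set.mem_setOf_eq]
    have h1 : t • (1 : Matrix m m ℂ) - W * τ * Wᴴ
        = t • ((1 : Matrix m m ℂ) + ((-t⁻¹) • (W * τ)) * Wᴴ) := by
      rw [smul_add, Matrix.smul_mul, smul_smul, mul_neg, mul_inv_cancel₀ ht]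
      simp [Matrix.smul_mul, sub_eq_add_neg]
    have h2 : t • (1 : Matrix n n ℂ) - τ
        = t • ((1 : Matrix n n ℂ) + (-t⁻¹) • τ) := by
      rw [smul_add, smul_smul, mul_neg, mul_inv_cancel₀ ht]
      simp [sub_eq_add_neg]
    rw [my_eval_charpoly, h1, Matrix.det_smul, Matrix.det_one_add_mul_comm]
    have h3 : Wᴴ * ((-t⁻¹) • (W * τ)) = (-t⁻¹) • τ := by
      rw [Matrix.mul_smul, ← Matrix.mul_assoc, hW, Matrix.one_mul]
    rw [h3, Polynomial.eval_mul, Polynomial.eval_pow, Polynomial.eval_X, my_eval_charpoly, h2,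
      Matrix.det_smul]
    rw [← mul_assoc, ← pow_add, Nat.sub_add_cancel hc]
  · exact Set.Finite.infinite_compl (Set.finite_singleton 0)

lemma negxlog2_zero : negxlog2 0 = 0 := by simp [negxlog2]

lemma entropy_isometry {m n : Type} [Fintype m] [DecidableEq m] [Fintype n] [DecidableEq n]
    (W : Matrix m n ℂ) (hW : Wᴴ * W = 1) {τ : Matrix n n ℂ} (hτ : τ.IsHermitian)
    (hc : Fintype.card n ≤ Fintype.card m) :
    entropy (W * τ * Wᴴ) = entropy τ := by
  have hM : (W * τ * Wᴴ).IsHermitian := by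
    have h : (W * τ * Wᴴ)ᴴ = W * τᴴ * Wᴴ := by
      rw [conjTranspose_mul, conjTranspose_mul, conjTranspose_conjTranspose, Matrix.mul_assoc]
    unfold Matrix.IsHermitian
    rw [h, hτ.eq]
  set k := Fintype.card m - Fintype.card n with hk
  have hch := charpoly_isometry W hW τ hc
  rw [hermitian_charpoly hM, hermitian_charpoly hτ] at hch
  have e1 : (∏ i, (X - C ((hM.eigenvalues i : ℝ) : ℂ))).roots
      = Finset.univ.val.map (fun i => ((hM.eigenvalues i : ℝ) : ℂ)) := by
    rw [Finset.prod_eq_multiset_prod]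
    have hmm : Multiset.map (fun i => X - C ((hM.eigenvalues i : ℝ) : ℂ)) Finset.univ.val
        = Multiset.map (fun a : ℂ => X - C a)
            (Multiset.map (fun i => ((hM.eigenvalues i : ℝ) : ℂ)) Finset.univ.val) :=
      (Multiset.map_map (fun a : ℂ => X - C a) _ _).symm
    rw [hmm]
    exact roots_multiset_prod_X_sub_C _
  have Pmonic : (∏ i, (X - C ((hτ.eigenvalues i : ℝ) : ℂ))).Monic :=
    monic_prod_of_monic _ _ (fun i _ => monic_X_sub_C _)
  have e2 : (X ^ k * ∏ i, (X - C ((hτ.eigenvalues i : ℝ) : ℂ))).roots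
      = Multiset.replicate k 0 + Finset.univ.val.map (fun i => ((hτ.eigenvalues i : ℝ) : ℂ)) := by
    have hmm : Multiset.map (fun i => X - C ((hτ.eigenvalues i : ℝ) : ℂ)) Finset.univ.val
        = Multiset.map (fun a : ℂ => X - C a)
            (Multiset.map (fun i => ((hτ.eigenvalues i : ℝ) : ℂ)) Finset.univ.val) :=
      (Multiset.map_map (fun a : ℂ => X - C a) _ _).symm
    rw [Polynomial.roots_mul (((monic_X_pow k).mul Pmonic).ne_zero),
      Polynomial.roots_pow, Polynomial.roots_X, Multiset.nsmul_singleton,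
      Finset.prod_eq_multiset_prod, hmm, roots_multiset_prod_X_sub_C]
  have hroots : Finset.univ.val.map (fun i => ((hM.eigenvalues i : ℝ) : ℂ))
      = Multiset.replicate k 0 + Finset.univ.val.map (fun i => ((hτ.eigenvalues i : ℝ) : ℂ)) := by
    rw [← e1, ← e2, hch]
  have hsum := congrArg (fun s : Multiset ℂ => (s.map fun z => negxlog2 z.re).sum) hroots
  simp only [Multiset.map_add, Multiset.sum_add, Multiset.map_replicate, Multiset.sum_replicate,
    Multiset.map_map, Function.comp, Complex.ofReal_re, Complex.zero_re, negxlog2_zero,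
    smul_zero, zero_add] at hsum
  rw [entropy, dif_pos hM, entropy, dif_pos hτ]
  rw [Finset.sum_eq_multiset_sum, Finset.sum_eq_multiset_sum]
  exact hsum


lemma pureMat_posSemidef {d : Type} [Fintype d] (v : d → ℂ) : (pureMat v).PosSemidef := by
  refine Matrix.PosSemidef.of_dotProduct_mulVec_nonneg ?_ ?_
  · ext i j
    simp [pureMat, Matrix.conjTranspose_apply, mul_comm]
  · intro x
    have h : star x ⬝ᵥ (pureMat v) *ᵥ x
        = star (∑ j, (starRingEnd ℂ) (v j) * x j) * (∑ j, (starRingEnd ℂ) (v j) * x j) := by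
      simp only [dotProduct, Matrix.mulVec, pureMat, Matrix.of_apply, Pi.star_apply,
        star_sum, star_mul', RCLike.star_def, starRingEnd_self_apply, Finset.sum_mul,
        Finset.mul_sum]
      rw [Finset.sum_comm]
      apply Finset.sum_congr rfl; intro j _
      apply Finset.sum_congr rfl; intro i _
      ring_nf
    rw [h]
    exact star_mul_self_nonneg _

lemma ptraceRight_posSemidef {A R : Type} [Fintype A] [Fintype R] [DecidableEq R]
    {N : Matrix (A × R) (A × R) ℂ} (hN : N.PosSemidef) : (ptraceRight N).PosSemidef := by
  refine Matrix.PosSemidef.of_dotProduct_mulVec_nonneg ?_ ?_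
  · ext a a'
    simp only [ptraceRight, Matrix.conjTranspose_apply, Matrix.of_apply, star_sum]
    apply Finset.sum_congr rfl; intro r _
    exact congrFun (congrFun hN.1 (a,r)) (a',r)
  · intro x
    have hRHS : ∀ r : R, star (fun p : A × R => if p.2 = r then x p.1 else 0) ⬝ᵥ
          N *ᵥ (fun p : A × R => if p.2 = r then x p.1 else 0)
        = ∑ a, ∑ a', star (x a) * N (a,r) (a',r) * x a' := by
      intro r
      simp only [dotProduct, Matrix.mulVec, Pi.star_apply, Fintype.sum_prod_type,
        apply_ite (star : ℂ → ℂ), star_zero, ite_mul, zero_mul, mul_ite, mul_zero]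
      simp only [Finset.sum_ite_eq', Finset.mem_univ, if_true]
      apply Finset.sum_congr rfl; intro a _
      rw [Finset.mul_sum]
      apply Finset.sum_congr rfl; intro a' _
      ring
    have hswap : ∀ (f : A → A → R → ℂ), ∑ a, ∑ a', ∑ r, f a a' r = ∑ r, ∑ a, ∑ a', f a a' r := by
      intro f
      calc ∑ a, ∑ a', ∑ r, f a a' r
          = ∑ a, ∑ r, ∑ a', f a a' r := Finset.sum_congr rfl fun a _ => Finset.sum_comm
        _ = ∑ r, ∑ a, ∑ a', f a a' r := Finset.sum_comm
    have h : star x ⬝ᵥ (ptraceRight N) *ᵥ x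
        = ∑ r, ∑ a, ∑ a', star (x a) * N (a,r) (a',r) * x a' := by
      rw [← hswap fun a a' r => star (x a) * N (a,r) (a',r) * x a']
      simp only [dotProduct, Matrix.mulVec, ptraceRight, Matrix.of_apply, Pi.star_apply,
        Finset.mul_sum, Finset.sum_mul]
      apply Finset.sum_congr rfl; intro a _
      apply Finset.sum_congr rfl; intro a' _
      apply Finset.sum_congr rfl; intro r _
      ring
    rw [h]
    exact Finset.sum_nonneg fun r _ => by rw [← hRHS r]; exact hN.dotProduct_mulVec_nonneg _

lemma trace_eq_sum_eigenvalues {n : Type} [Fintype n] [DecidableEq n] {M : Matrix n n ℂ}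
    (hM : M.IsHermitian) : M.trace = ∑ i, ((hM.eigenvalues i : ℝ) : ℂ) := by
  have hUU : star (hM.eigenvectorUnitary : Matrix n n ℂ) * (hM.eigenvectorUnitary : Matrix n n ℂ) = 1 :=
    (Matrix.mem_unitaryGroup_iff').mp hM.eigenvectorUnitary.2
  conv_lhs => rw [hM.spectral_theorem, Unitary.conjStarAlgAut_apply]
  rw [Matrix.trace_mul_cycle, hUU, Matrix.one_mul, Matrix.trace_diagonal]
  simp [Function.comp]

lemma entropy_nonneg_of_density {n : Type} [Fintype n] [DecidableEq n] {M : Matrix n n ℂ}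
    (hM : IsDensity M) : 0 ≤ entropy M := by
  have hH : M.IsHermitian := hM.1.1
  rw [entropy, dif_pos hH]
  have hsum : ∑ i, hH.eigenvalues i = 1 := by
    have h := trace_eq_sum_eigenvalues hH
    rw [hM.2] at h
    have h2 := congrArg Complex.re h.symm
    simpa using h2
  apply Finset.sum_nonneg
  intro i _
  rcases le_or_gt (hH.eigenvalues i) 0 with h0 | h0
  · simp [negxlog2, h0]
  · have hle : hH.eigenvalues i ≤ 1 := by
      rw [← hsum]
      exact Finset.single_le_sum (fun j _ => hM.1.eigenvalues_nonneg j) (Finset.mem_univ i)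
    rw [negxlog2, if_neg (not_le.mpr h0)]
    have : Real.logb 2 (hH.eigenvalues i) ≤ 0 :=
      Real.logb_nonpos (by norm_num) (le_of_lt h0) hle
    nlinarith

lemma epOut_posSemidef {A A' A'' R : Type} [Fintype A] [Fintype A'] [Fintype A''] [Fintype R]
    [DecidableEq R] [DecidableEq A]
    (ψ : A × A' × R → ℂ) (Φ : Matrix A' A' ℂ →ₗ[ℂ] Matrix A'' A'' ℂ)
    (hΦ : IsQChannel Φ) : (epOut ψ Φ).PosSemidef := by
  have h1 : (pureMat (fun p : A' × (A × R) => ψ (p.2.1, p.1, p.2.2))).PosSemidef :=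
    pureMat_posSemidef _
  have h2 := hΦ.1 (A × R) _ h1
  have h3 := h2.submatrix (fun p : (A × A'') × R => (p.1.2, (p.1.1, p.2)))
  have h4 := ptraceRight_posSemidef h3
  have heq : epOut ψ Φ = ptraceRight ((matExt Φ (pureMat fun p : A' × (A × R) => ψ (p.2.1, p.1, p.2.2))).submatrix
      (fun p : (A × A'') × R => (p.1.2, (p.1.1, p.2))) (fun p : (A × A'') × R => (p.1.2, (p.1.1, p.2)))) := by
    ext p q
    simp only [epOut, ptraceRight, Matrix.of_apply, Matrix.submatrix_apply, matExt, pureMat]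
  rw [heq]
  exact h4

lemma trace_matExt {A B n : Type} [Fintype A] [Fintype B] [Fintype n]
    (Φ : Matrix A A ℂ →ₗ[ℂ] Matrix B B ℂ) (hTP : ∀ M : Matrix A A ℂ, (Φ M).trace = M.trace)
    (M : Matrix (A × n) (A × n) ℂ) : (matExt Φ M).trace = M.trace := by
  have h : (matExt Φ M).trace = ∑ m : n, (Φ (Matrix.of fun a a' => M (a, m) (a', m))).trace := by
    simp only [Matrix.trace, Matrix.diag, matExt, Matrix.of_apply, Fintype.sum_prod_type]
    exact Finset.sum_comm
  rw [h]
  simp only [hTP]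
  simp only [Matrix.trace, Matrix.diag, Matrix.of_apply, Fintype.sum_prod_type]
  exact Finset.sum_comm

lemma epOut_trace {A A' A'' R : Type} [Fintype A] [Fintype A'] [Fintype A''] [Fintype R]
    (ψ : A × A' × R → ℂ) (Φ : Matrix A' A' ℂ →ₗ[ℂ] Matrix A'' A'' ℂ)
    (hTP : ∀ M : Matrix A' A' ℂ, (Φ M).trace = M.trace)
    {σ : Matrix (A × R) (A × R) ℂ} (hψ : Purifies ψ σ) (hσ : σ.trace = 1) :
    (epOut ψ Φ).trace = 1 := by
  have h : (epOut ψ Φ).trace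
      = ∑ a : A, ∑ r : R, (Φ (Matrix.of fun x x' => ψ (a, x, r) * (starRingEnd ℂ) (ψ (a, x', r)))).trace := by
    simp only [Matrix.trace, Matrix.diag, epOut, Matrix.of_apply, Fintype.sum_prod_type]
    apply Finset.sum_congr rfl; intro a _
    exact Finset.sum_comm
  rw [h]
  simp only [hTP]
  have h2 : ∀ (a : A) (r : R), (Matrix.of fun x x' => ψ (a, x, r) * (starRingEnd ℂ) (ψ (a, x', r))).trace
      = σ (a, r) (a, r) := by
    intro a r
    rw [hψ a r a r]
    simp [Matrix.trace, Matrix.diag]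
  simp only [h2]
  rw [← hσ]
  simp [Matrix.trace, Matrix.diag, Fintype.sum_prod_type]

lemma sum_swap3 {α β γ : Type} [Fintype α] [Fintype β] [Fintype γ] (f : α → β → γ → ℂ) :
    ∑ a, ∑ b, ∑ c, f a b c = ∑ c, ∑ a, ∑ b, f a b c := by
  calc ∑ a, ∑ b, ∑ c, f a b c = ∑ a, ∑ c, ∑ b, f a b c :=
        Finset.sum_congr rfl fun a _ => Finset.sum_comm
    _ = ∑ c, ∑ a, ∑ b, f a b c := Finset.sum_comm

lemma exists_kraus {A B : Type} [Fintype A] [DecidableEq A] [Fintype B] [DecidableEq B]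
    (Φ : Matrix A A ℂ →ₗ[ℂ] Matrix B B ℂ) (hΦ : IsQChannel Φ) :
    ∃ K : (B × A) → Matrix B A ℂ,
      (∀ X, Φ X = ∑ k, K k * X * (K k)ᴴ) ∧ (∑ k, (K k)ᴴ * K k = 1) := by
  classical
  set u : A × A → ℂ := fun p => if p.1 = p.2 then 1 else 0 with hu
  have hP : (pureMat u).PosSemidef := pureMat_posSemidef u
  have hC : (matExt Φ (pureMat u)).PosSemidef := hΦ.1 A _ hP
  set C := matExt Φ (pureMat u) with hCdef
  set S := posSemidefSqrt hC with hSdef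
  have hSS : S * S = C := psqrt_mul_self hC
  have hSH : S.IsHermitian := psqrt_herm hC
  have hCsum : ∀ p q, C p q = ∑ k, S p k * (starRingEnd ℂ) (S q k) := by
    intro p q
    have : C p q = (S * Sᴴ) p q := by rw [hSH.eq, hSS]
    rw [this, Matrix.mul_apply]
    simp [Matrix.conjTranspose_apply]
  have hstd : ∀ (a a' : A) (b b' : B),
      Φ (Matrix.single a a' (1:ℂ)) b b' = C (b, a) (b', a') := by
    intro a a' b b'
    have : (Matrix.of fun c c' => pureMat u (c, a) (c', a')) = Matrix.single a a' (1:ℂ) := by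
      ext c c'
      simp only [Matrix.of_apply, pureMat, hu, Matrix.single]
      by_cases h1 : a = c <;> by_cases h2 : a' = c' <;>
        simp [h1, h2, Matrix.single, eq_comm]
    calc Φ (Matrix.single a a' (1:ℂ)) b b'
        = Φ (Matrix.of fun c c' => pureMat u (c, a) (c', a')) b b' := by rw [this]
      _ = C (b, a) (b', a') := by simp only [hCdef, matExt, Matrix.of_apply]
  refine ⟨fun k => Matrix.of fun b a => S (b, a) k, ?_, ?_⟩
  · -- Kraus representation
    intro X
    ext b b'
    have hXdecomp := Matrix.matrix_eq_sum_single X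
    conv_lhs => rw [hXdecomp]
    rw [map_sum]
    simp only [Finset.sum_apply, Matrix.sum_apply]
    have hsmul : ∀ (a a' : A), Matrix.single a a' (X a a') = X a a' • Matrix.single a a' (1:ℂ) := by
      intro a a'
      rw [Matrix.smul_single, smul_eq_mul, mul_one]
    calc ∑ a, (Φ (∑ a', Matrix.single a a' (X a a'))) b b'
        = ∑ a, ∑ a', X a a' * C (b, a) (b', a') := by
          apply Finset.sum_congr rfl; intro a _
          rw [map_sum]
          simp only [Matrix.sum_apply]
          apply Finset.sum_congr rfl; intro a' _
          rw [hsmul, _root_.map_smul]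
          simp only [Matrix.smul_apply, smul_eq_mul]
          rw [hstd]
      _ = ∑ k, ∑ a, ∑ a', X a a' * (S (b, a) k * (starRingEnd ℂ) (S (b', a') k)) := by
          rw [← sum_swap3]
          apply Finset.sum_congr rfl; intro a _
          apply Finset.sum_congr rfl; intro a' _
          rw [hCsum, Finset.mul_sum]
      _ = ∑ k, (Matrix.of (fun b a => S (b, a) k) * X * (Matrix.of fun b a => S (b, a) k)ᴴ) b b' := by
          apply Finset.sum_congr rfl; intro k _
          simp only [Matrix.mul_apply, Matrix.conjTranspose_apply, Matrix.of_apply,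
            starRingEnd_apply]
          conv_lhs => rw [Finset.sum_comm]
          apply Finset.sum_congr rfl; intro a' _
          rw [Finset.sum_mul]
          apply Finset.sum_congr rfl; intro a _
          ring
  · -- trace preservation gives isometry condition
    ext a a'
    have h2 : (∑ k : B × A, (Matrix.of fun b a => S (b, a) k)ᴴ * (Matrix.of fun b a => S (b, a) k)) a a'
        = ∑ b, C (b, a') (b, a) := by
      simp only [Matrix.sum_apply, Matrix.mul_apply, Matrix.conjTranspose_apply, Matrix.of_apply]
      rw [Finset.sum_comm]
      apply Finset.sum_congr rfl; intro b _
      rw [hCsum]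
      apply Finset.sum_congr rfl; intro k _
      rw [starRingEnd_apply]
      ring
    have h3 : ∑ b, C (b, a') (b, a) = (Φ (Matrix.single a' a (1:ℂ))).trace := by
      simp only [Matrix.trace, Matrix.diag]
      exact Finset.sum_congr rfl fun b _ => (hstd a' a b b).symm
    rw [h2, h3, hΦ.2]
    by_cases h : a = a'
    · subst h
      simp [Matrix.trace, Matrix.diag, Matrix.single, Matrix.one_apply]
    · have h' : ¬ a' = a := fun hh => h hh.symm
      simp only [Matrix.trace, Matrix.diag, Matrix.single, Matrix.one_apply, Matrix.of_apply]
      rw [if_neg h]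
      apply Finset.sum_eq_zero
      intro c _
      rw [if_neg]
      rintro ⟨h1, hh2⟩
      exact h (hh2.trans h1.symm)

def tensorIdLeft {E A' A'' : Type} [Fintype E] [Fintype A'] [Fintype A'']
    (N : Matrix A' A' ℂ →ₗ[ℂ] Matrix A'' A'' ℂ) :
    Matrix (E × A') (E × A') ℂ →ₗ[ℂ] Matrix (E × A'') (E × A'') ℂ where
  toFun M := Matrix.of fun p q => N (Matrix.of fun x x' => M (p.1, x) (q.1, x')) p.2 q.2
  map_add' M1 M2 := by
    ext p q
    have h : (Matrix.of fun x x' => M1 (p.1, x) (q.1, x') + M2 (p.1, x) (q.1, x'))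
        = (Matrix.of fun x x' => M1 (p.1, x) (q.1, x')) + (Matrix.of fun x x' => M2 (p.1, x) (q.1, x')) := by
      ext x x'; simp
    simp only [Matrix.of_apply, Matrix.add_apply]
    rw [h, map_add]
    simp
  map_smul' c M := by
    ext p q
    have h : (Matrix.of fun x x' => c • M (p.1, x) (q.1, x'))
        = c • (Matrix.of fun x x' => M (p.1, x) (q.1, x')) := by
      ext x x'; simp
    simp only [Matrix.of_apply, Matrix.smul_apply, RingHom.id_apply]
    rw [h, _root_.map_smul]
    simp

lemma tensorIdLeft_isQChannel {E A' A'' : Type} [Fintype E] [Fintype A'] [Fintype A'']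
    (N : Matrix A' A' ℂ →ₗ[ℂ] Matrix A'' A'' ℂ) (hN : IsQChannel N) :
    IsQChannel (tensorIdLeft (E := E) N) := by
  constructor
  · intro n _ M hM
    have hM' : (M.submatrix (fun p : A' × (E × n) => ((p.2.1, p.1), p.2.2))
        (fun p : A' × (E × n) => ((p.2.1, p.1), p.2.2))).PosSemidef := hM.submatrix _
    have h2 := hN.1 (E × n) (M.submatrix _ _) hM'
    have heq : matExt (tensorIdLeft (E := E) N) M
        = (matExt N (M.submatrix (fun p : A' × (E × n) => ((p.2.1, p.1), p.2.2))
            (fun p : A' × (E × n) => ((p.2.1, p.1), p.2.2)))).submatrix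
          (fun p : (E × A'') × n => (p.1.2, (p.1.1, p.2)))
          (fun p : (E × A'') × n => (p.1.2, (p.1.1, p.2))) := by
      ext p q
      simp only [matExt, tensorIdLeft, Matrix.of_apply, Matrix.submatrix_apply,
        LinearMap.coe_mk, AddHom.coe_mk]
    rw [heq]
    exact h2.submatrix _
  · intro M
    have h : ∀ e : E, ∑ y, N (Matrix.of fun x x' => M (e, x) (e, x')) y y = ∑ x, M (e, x) (e, x) := by
      intro e
      have := hN.2 (Matrix.of fun x x' => M (e, x) (e, x'))
      simpa [Matrix.trace, Matrix.diag] using this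
    simp only [Matrix.trace, Matrix.diag, tensorIdLeft, Matrix.of_apply, Fintype.sum_prod_type,
      LinearMap.coe_mk, AddHom.coe_mk]
    simp only [h]

lemma sum_rot3 {α β γ : Type} [Fintype α] [Fintype β] [Fintype γ] (f : α → β → γ → ℂ) :
    ∑ a, ∑ b, ∑ c, f a b c = ∑ b, ∑ c, ∑ a, f a b c :=
  calc ∑ a, ∑ b, ∑ c, f a b c = ∑ b, ∑ a, ∑ c, f a b c := Finset.sum_comm
    _ = ∑ b, ∑ c, ∑ a, f a b c := Finset.sum_congr rfl fun _ _ => Finset.sum_comm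

lemma witness_nonneg {A R : Type} [Fintype A] [DecidableEq A] [Fintype R]
    {σ : Matrix (A × R) (A × R) ℂ} (hσ : σ.trace = 1) {e : ℝ} {A' A'' : Type}
    [Fintype A'] [Fintype A''] [DecidableEq A'']
    (hw : EpWitness σ e A' A'') : 0 ≤ e := by
  classical
  obtain ⟨ψ, Λ, hpur, hch, rfl⟩ := hw
  exact entropy_nonneg_of_density ⟨epOut_posSemidef ψ Λ hch, epOut_trace ψ Λ hch.2 hpur hσ⟩

lemma witness_id {A R : Type} [Fintype A] [DecidableEq A] [Fintype R]
    (ρ : Matrix (A × R) (A × R) ℂ) (hρ : ρ.PosSemidef) :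
    ∃ e : ℝ, @EpWitness A R _ _ _ ρ e (A × R) (A × R) _ _ (Classical.decEq _) := by
  classical
  refine ⟨_, (fun p : A × (A × R) × R => posSemidefSqrt hρ (p.1, p.2.2) p.2.1), LinearMap.id, ?_, ?_, rfl⟩
  · intro a r a' r'
    have hS : (posSemidefSqrt hρ)ᴴ = posSemidefSqrt hρ := psqrt_herm hρ
    have hmul : ρ = posSemidefSqrt hρ * posSemidefSqrt hρ := (psqrt_mul_self hρ).symm
    calc ρ (a, r) (a', r') = (posSemidefSqrt hρ * posSemidefSqrt hρ) (a, r) (a', r') := by rw [← hmul]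
      _ = ∑ x, posSemidefSqrt hρ (a, r) x * posSemidefSqrt hρ x (a', r') := Matrix.mul_apply
      _ = ∑ x, posSemidefSqrt hρ (a, r) x * (starRingEnd ℂ) (posSemidefSqrt hρ (a', r') x) := by
          apply Finset.sum_congr rfl; intro x _
          congr 1
          conv_lhs => rw [← hS]
          rw [Matrix.conjTranspose_apply, starRingEnd_apply]
  · constructor
    · intro n _ M hM
      have h : matExt (LinearMap.id : Matrix (A × R) (A × R) ℂ →ₗ[ℂ] Matrix (A × R) (A × R) ℂ) M = M := by
        ext p q
        simp [matExt]
      rwa [h]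
    · intro M; rfl

lemma witness_transfer {A B R : Type} [Fintype A] [DecidableEq A] [Fintype B] [DecidableEq B]
    [Fintype R] (ρ : Matrix (A × R) (A × R) ℂ)
    (Φ : Matrix A A ℂ →ₗ[ℂ] Matrix B B ℂ) (hΦ : IsQChannel Φ) (hB : Nonempty B)
    {e : ℝ} {A' A'' : Type} [Fintype A'] [Fintype A''] [DecidableEq A'']
    (hw : EpWitness ρ e A' A'') :
    EpWitness (matExt Φ ρ) e ((B × A) × A') ((B × A) × A'') := by
  classical
  obtain ⟨ψ, N, hpur, hch, rfl⟩ := hw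
  obtain ⟨K, hK, hK1⟩ := exists_kraus Φ hΦ
  set φ : B × ((B × A) × A') × R → ℂ :=
    fun p => ∑ a, K p.2.1.1 p.1 a * ψ (a, p.2.1.2, p.2.2) with hφ
  refine ⟨φ, tensorIdLeft N, ?_, tensorIdLeft_isQChannel N hch, ?_⟩
  · -- Purifies
    intro b r b' r'
    have hL : matExt Φ ρ (b, r) (b', r')
        = ∑ k, ∑ a, ∑ a', K k b a * ρ (a, r) (a', r') * (starRingEnd ℂ) (K k b' a') := by
      have h0 : matExt Φ ρ (b, r) (b', r') = Φ (Matrix.of fun a a' => ρ (a, r) (a', r')) b b' := rfl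
      rw [h0, hK]
      simp only [Matrix.sum_apply, Matrix.mul_apply, Matrix.conjTranspose_apply, Matrix.of_apply,
        starRingEnd_apply, Finset.sum_mul]
      apply Finset.sum_congr rfl; intro k _
      rw [Finset.sum_comm]
    rw [hL]
    conv_rhs => rw [Fintype.sum_prod_type]
    apply Finset.sum_congr rfl; intro k _
    calc ∑ a, ∑ a', K k b a * ρ (a, r) (a', r') * (starRingEnd ℂ) (K k b' a')
        = ∑ a, ∑ a', ∑ x, (K k b a * (starRingEnd ℂ) (K k b' a'))
            * (ψ (a, x, r) * (starRingEnd ℂ) (ψ (a', x, r'))) := by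
          apply Finset.sum_congr rfl; intro a _
          apply Finset.sum_congr rfl; intro a' _
          rw [hpur a r a' r', Finset.mul_sum, Finset.sum_mul]
          apply Finset.sum_congr rfl; intro x _
          ring
      _ = ∑ x, ∑ a, ∑ a', (K k b a * (starRingEnd ℂ) (K k b' a'))
            * (ψ (a, x, r) * (starRingEnd ℂ) (ψ (a', x, r'))) := (sum_rot3 _).symm
      _ = ∑ x, (∑ a, K k b a * ψ (a, x, r)) * (starRingEnd ℂ) (∑ a', K k b' a' * ψ (a', x, r')) := by
          apply Finset.sum_congr rfl; intro x _
          rw [map_sum, Finset.sum_mul]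
          apply Finset.sum_congr rfl; intro a _
          rw [Finset.mul_sum]
          apply Finset.sum_congr rfl; intro a' _
          rw [_root_.map_mul]
          ring
      _ = ∑ x, φ (b, (k, x), r) * (starRingEnd ℂ) (φ (b', (k, x), r')) := rfl
  · -- entropy equality
    have hτ : (epOut ψ N).PosSemidef := epOut_posSemidef ψ N hch
    set τ := epOut ψ N with hτdef
    set W : Matrix (B × ((B × A) × A'')) (A × A'') ℂ :=
      Matrix.of fun p q => K p.2.1 p.1 q.1 * (if p.2.2 = q.2 then (1:ℂ) else 0) with hWdef
    have hK1' : ∀ a a' : A, (∑ b : B, ∑ k : B × A, star (K k b a) * K k b a')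
        = if a = a' then (1:ℂ) else 0 := by
      intro a a'
      have h := congrFun (congrFun hK1 a) a'
      simp only [Matrix.sum_apply, Matrix.mul_apply, Matrix.conjTranspose_apply,
        Matrix.one_apply, Matrix.of_apply] at h
      rw [← h, Finset.sum_comm]
    have hWW : Wᴴ * W = 1 := by
      ext ⟨a, y⟩ ⟨a', y'⟩
      have hcollapse : ∀ y1 : A'', ∑ y2 : A'', (if y2 = y then (1:ℂ) else 0) * (if y2 = y' then 1 else 0) = if y = y' then 1 else 0 := by
        intro y1
        simp [ite_mul, Finset.sum_ite_eq', eq_comm]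
      calc (Wᴴ * W) (a, y) (a', y')
          = ∑ p : B × ((B × A) × A''), star (W p (a, y)) * W p (a', y') := by
            rw [Matrix.mul_apply]
            apply Finset.sum_congr rfl; intro p _
            rw [Matrix.conjTranspose_apply]
        _ = ∑ bb : B, ∑ k : B × A, ∑ y2 : A'', (star (K k bb a) * K k bb a')
              * ((if y2 = y then (1:ℂ) else 0) * (if y2 = y' then 1 else 0)) := by
            rw [Fintype.sum_prod_type]
            apply Finset.sum_congr rfl; intro bb _
            rw [Fintype.sum_prod_type]
            apply Finset.sum_congr rfl; intro k _
            apply Finset.sum_congr rfl; intro y2 _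
            simp only [hWdef, Matrix.of_apply, star_mul', apply_ite (star : ℂ → ℂ), star_one,
              star_zero]
            ring
        _ = ∑ bb : B, ∑ k : B × A, (star (K k bb a) * K k bb a') * (if y = y' then (1:ℂ) else 0) := by
            apply Finset.sum_congr rfl; intro bb _
            apply Finset.sum_congr rfl; intro k _
            rw [← Finset.mul_sum, hcollapse y]
        _ = (if a = a' then (1:ℂ) else 0) * (if y = y' then 1 else 0) := by
            rw [← hK1' a a', Finset.sum_mul]
            apply Finset.sum_congr rfl; intro bb _
            rw [Finset.sum_mul]
        _ = (1 : Matrix (A × A'') (A × A'') ℂ) (a, y) (a', y') := by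
            rw [Matrix.one_apply]
            by_cases h1 : a = a' <;> by_cases h2 : y = y' <;>
              simp [h1, h2, Prod.ext_iff]
    have hcard : Fintype.card (A × A'') ≤ Fintype.card (B × ((B × A) × A'')) := by
      have h1 : 1 ≤ Fintype.card B := Fintype.card_pos
      have h2 := Nat.mul_le_mul h1 (Nat.mul_le_mul (Nat.mul_le_mul h1
        (le_refl (Fintype.card A))) (le_refl (Fintype.card A'')))
      simpa [Fintype.card_prod] using h2
    have hEq : epOut φ (tensorIdLeft N) = W * τ * Wᴴ := by
      ext ⟨b, k, y⟩ ⟨b', k', y'⟩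
      have hblock : ∀ rr : R, (Matrix.of fun x x' => φ (b, (k, x), rr) * (starRingEnd ℂ) (φ (b', (k', x'), rr)))
          = ∑ a, ∑ a', (K k b a * (starRingEnd ℂ) (K k' b' a'))
              • (Matrix.of fun x x' => ψ (a, x, rr) * (starRingEnd ℂ) (ψ (a', x', rr))) := by
        intro rr
        ext x x'
        simp only [Matrix.sum_apply, Matrix.smul_apply, Matrix.of_apply, smul_eq_mul, hφ]
        rw [map_sum, Finset.sum_mul]
        apply Finset.sum_congr rfl; intro a _
        rw [Finset.mul_sum]
        apply Finset.sum_congr rfl; intro a' _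
        rw [_root_.map_mul]
        ring
      have hLHS : epOut φ (tensorIdLeft N) (b, (k, y)) (b', (k', y'))
          = ∑ a, ∑ a', (K k b a * (starRingEnd ℂ) (K k' b' a')) * τ (a, y) (a', y') := by
        calc epOut φ (tensorIdLeft N) (b, (k, y)) (b', (k', y'))
            = ∑ rr, N (Matrix.of fun x x' => φ (b, (k, x), rr) * (starRingEnd ℂ) (φ (b', (k', x'), rr))) y y' := rfl
          _ = ∑ rr, ∑ a, ∑ a', (K k b a * (starRingEnd ℂ) (K k' b' a'))
                * N (Matrix.of fun x x' => ψ (a, x, rr) * (starRingEnd ℂ) (ψ (a', x', rr))) y y' := by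
              apply Finset.sum_congr rfl; intro rr _
              rw [hblock rr, map_sum]
              simp only [Matrix.sum_apply]
              apply Finset.sum_congr rfl; intro a _
              rw [map_sum]
              simp only [Matrix.sum_apply]
              apply Finset.sum_congr rfl; intro a' _
              rw [_root_.map_smul]
              simp only [Matrix.smul_apply, smul_eq_mul]
          _ = ∑ a, ∑ a', ∑ rr, (K k b a * (starRingEnd ℂ) (K k' b' a'))
                * N (Matrix.of fun x x' => ψ (a, x, rr) * (starRingEnd ℂ) (ψ (a', x', rr))) y y' := sum_rot3 _
          _ = ∑ a, ∑ a', (K k b a * (starRingEnd ℂ) (K k' b' a')) * τ (a, y) (a', y') := by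
              apply Finset.sum_congr rfl; intro a _
              apply Finset.sum_congr rfl; intro a' _
              rw [← Finset.mul_sum]
              rfl
      have hWτ : ∀ (a' : A) (y2 : A''), (W * τ) (b, (k, y)) (a', y2) = ∑ a, K k b a * τ (a, y) (a', y2) := by
        intro a' y2
        rw [Matrix.mul_apply, Fintype.sum_prod_type]
        apply Finset.sum_congr rfl; intro a _
        simp only [hWdef, Matrix.of_apply]
        simp [mul_ite, mul_one, mul_zero, ite_mul, zero_mul, Finset.sum_ite_eq]
      have hterm : ∀ (a' : A) (y2 : A''), (W * τ) (b, (k, y)) (a', y2) * Wᴴ (a', y2) (b', (k', y'))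
          = if y' = y2 then (W * τ) (b, (k, y)) (a', y2) * (starRingEnd ℂ) (K k' b' a') else 0 := by
        intro a' y2
        rw [Matrix.conjTranspose_apply]
        simp only [hWdef, Matrix.of_apply, star_mul', apply_ite (star : ℂ → ℂ), star_one,
          star_zero, starRingEnd_apply]
        by_cases h : y' = y2 <;> simp [h] <;> ring
      have hRHS : (W * τ * Wᴴ) (b, (k, y)) (b', (k', y'))
          = ∑ a, ∑ a', (K k b a * (starRingEnd ℂ) (K k' b' a')) * τ (a, y) (a', y') := by
        rw [Matrix.mul_apply, Fintype.sum_prod_type]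
        conv_rhs => rw [Finset.sum_comm]
        apply Finset.sum_congr rfl; intro a' _
        simp only [hterm, Finset.sum_ite_eq, Finset.mem_univ, if_true]
        rw [hWτ a' y', Finset.sum_mul]
        apply Finset.sum_congr rfl; intro a _
        ring
      rw [hLHS, ← hRHS]
    rw [hτdef] at hEq
    rw [hEq]
    exact (entropy_isometry W hWW hτ.1 hcard).symm


end AuxProofs

/-- monotonicity of the entanglement of purification under a local channel. -/
theorem ep_monotone
    {A B R : Type} [Fintype A] [DecidableEq A] [Fintype B] [DecidableEq B] [Fintype R]
    (ρ : Matrix (A × R) (A × R) ℂ) (hρ : IsDensity ρ)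
    (Φ : Matrix A A ℂ →ₗ[ℂ] Matrix B B ℂ) (hΦ : IsQChannel Φ) :
    Ep (matExt Φ ρ) ≤ Ep ρ := by
  have hAR : Nonempty (A × R) := by
    by_contra h
    rw [not_nonempty_iff] at h
    have h0 : ρ.trace = 0 := by simp [Matrix.trace]
    rw [hρ.2] at h0
    exact one_ne_zero h0
  have hA : Nonempty A := ⟨hAR.some.1⟩
  have hB : Nonempty B := by
    by_contra h
    rw [not_nonempty_iff] at h
    have h1 := hΦ.2 (1 : Matrix A A ℂ)
    rw [Matrix.trace_one] at h1
    have h2 : (Φ 1).trace = 0 := by simp [Matrix.trace]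
    rw [h2] at h1
    exact (Nat.cast_ne_zero (R := ℂ)).mpr (Fintype.card_ne_zero (α := A)) h1.symm
  apply csInf_le_csInf
  · refine ⟨0, fun e he => ?_⟩
    obtain ⟨B', B'', i1, i2, i3, hw⟩ := he
    have hσ : (matExt Φ ρ).trace = 1 := by rw [trace_matExt Φ hΦ.2, hρ.2]
    exact @witness_nonneg B R _ _ _ _ hσ e B' B'' i1 i2 i3 hw
  · obtain ⟨e0, hw0⟩ := witness_id ρ hρ.1
    exact ⟨e0, A × R, A × R, _, _, _, hw0⟩
  · rintro e ⟨A', A'', i1, i2, i3, hw⟩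
    exact ⟨(B × A) × A', (B × A) × A'', _, _, _,
      @witness_transfer A B R _ _ _ _ _ ρ Φ hΦ hB e A' A'' i1 i2 i3 hw⟩
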